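/- arXiv:2508.13981 — 5 statements merged into one kernel-verified Lean document; each statement's English description precedes it below -/
import Mathlib

section
/- (Horizon-Free Q-Error Bound, Lemma 2). Let σ̂_min := min over k of p̂ k, and suppose σ̂_min > 0. Then for every step h with 1 ≤ h ≤ H and every arm k, |Q h k − Q̂ h k| ≤ (2 · e_max / σ̂_min) · (max over j ∈ Fin K of |p j − p̂ j|). -/
/-- **Horizon-Free Q-Error Bound (Lemma 2).**
With the backward-planned value functions `Q, V` (under true click probabilities `p`)
and `Q̂, V̂` (under estimated click probabilities `p̂`), and with
`σ̂_min := ⨅ k, p̂ k > 0`, for every step `1 ≤ h ≤ H` and every arm `k`,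
`|Q h k − Q̂ h k| ≤ (2 e_max / σ̂_min) · max_j |p j − p̂ j|`. -/
theorem horizon_free_Q_error_bound
    (K H : ℕ) (hK : 1 ≤ K) (hH : 1 ≤ H)
    (p phat e : Fin K → ℝ) (emax : ℝ)
    (hp : ∀ k, 0 < p k ∧ p k < 1)
    (hphat : ∀ k, 0 < phat k ∧ phat k < 1)
    (he : ∀ k, 0 ≤ e k ∧ e k ≤ emax)
    (Q Qhat : ℕ → Fin K → ℝ) (V Vhat : ℕ → ℝ)
    (hVH : V (H + 1) = 0) (hVhatH : Vhat (H + 1) = 0)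
    (hQ : ∀ h, 1 ≤ h → h ≤ H → ∀ k, Q h k = p k * e k + (1 - p k) * V (h + 1))
    (hQhat : ∀ h, 1 ≤ h → h ≤ H → ∀ k,
      Qhat h k = phat k * e k + (1 - phat k) * Vhat (h + 1))
    (hV : ∀ h, 1 ≤ h → h ≤ H → V h = ⨆ k, Q h k)
    (hVhat : ∀ h, 1 ≤ h → h ≤ H → Vhat h = ⨆ k, Qhat h k)
    (hσ : 0 < ⨅ k, phat k) :
    ∀ h, 1 ≤ h → h ≤ H → ∀ k,
      |Q h k - Qhat h k| ≤
        (2 * emax / ⨅ j, phat j) * ⨆ j, |p j - phat j| := by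
  haveI : Nonempty (Fin K) := Fin.pos_iff_nonempty.mp hK
  set σ := ⨅ k, phat k with hσdef
  set δ := ⨆ j, |p j - phat j| with hδdef
  obtain ⟨k0⟩ := ‹Nonempty (Fin K)›
  have hemax : 0 ≤ emax := (he k0).1.trans (he k0).2
  have hbdd : ∀ f : Fin K → ℝ, BddAbove (Set.range f) :=
    fun f => (Set.finite_range f).bddAbove
  have hbddb : ∀ f : Fin K → ℝ, BddBelow (Set.range f) :=
    fun f => (Set.finite_range f).bddBelow
  have hδk : ∀ k, |p k - phat k| ≤ δ := by
    intro k; rw [hδdef]; exact le_ciSup (f := fun j => |p j - phat j|) (hbdd _) k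
  have hδ0 : 0 ≤ δ := (abs_nonneg _).trans (hδk k0)
  have hσk : ∀ k, σ ≤ phat k := by
    intro k; rw [hσdef]; exact ciInf_le (hbddb _) k
  have hσ1 : σ < 1 := lt_of_le_of_lt (hσk k0) (hphat k0).2
  have key : ∀ d h, h + d = H + 1 → 1 ≤ h →
      0 ≤ V h ∧ V h ≤ emax ∧ 0 ≤ Vhat h ∧ Vhat h ≤ emax ∧
      |V h - Vhat h| ≤ emax * δ / σ := by
    intro d
    induction d with
    | zero =>
      intro h hh _
      have : h = H + 1 := by omega
      subst this
      refine ⟨le_of_eq hVH.symm, hVH ▸ hemax, le_of_eq hVhatH.symm, hVhatH ▸ hemax, ?_⟩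
      rw [hVH, hVhatH]
      simp only [sub_zero, abs_zero]
      positivity
    | succ d ih =>
      intro h hh h1
      have hhH : h ≤ H := by omega
      obtain ⟨iv0, ive, ivh0, ivhe, ivd⟩ := ih (h + 1) (by omega) (by omega)
      have hQb : ∀ k, 0 ≤ Q h k ∧ Q h k ≤ emax := by
        intro k
        rw [hQ h h1 hhH k]
        obtain ⟨hp0, hp1⟩ := hp k
        obtain ⟨he0, he1⟩ := he k
        constructor <;> nlinarith
      have hQhb : ∀ k, 0 ≤ Qhat h k ∧ Qhat h k ≤ emax := by
        intro k
        rw [hQhat h h1 hhH k]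
        obtain ⟨hp0, hp1⟩ := hphat k
        obtain ⟨he0, he1⟩ := he k
        constructor <;> nlinarith
      have hVb0 : 0 ≤ V h := (hV h h1 hhH) ▸ ((hQb k0).1.trans (le_ciSup (hbdd _) k0))
      have hVbe : V h ≤ emax := (hV h h1 hhH) ▸ (ciSup_le fun k => (hQb k).2)
      have hVhb0 : 0 ≤ Vhat h := (hVhat h h1 hhH) ▸ ((hQhb k0).1.trans (le_ciSup (hbdd _) k0))
      have hVhbe : Vhat h ≤ emax := (hVhat h h1 hhH) ▸ (ciSup_le fun k => (hQhb k).2)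
      have hQd : ∀ k, |Q h k - Qhat h k| ≤ emax * δ / σ := by
        intro k
        rw [hQ h h1 hhH k, hQhat h h1 hhH k]
        have heq : p k * e k + (1 - p k) * V (h + 1) -
            (phat k * e k + (1 - phat k) * Vhat (h + 1)) =
            (p k - phat k) * (e k - V (h + 1)) +
            (1 - phat k) * (V (h + 1) - Vhat (h + 1)) := by ring
        rw [heq]
        have h1p : 0 ≤ 1 - phat k := le_of_lt (by linarith [(hphat k).2])
        have hev : |e k - V (h + 1)| ≤ emax := by
          rw [abs_sub_le_iff]
          obtain ⟨he0, he1⟩ := he k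
          constructor <;> linarith
        calc |(p k - phat k) * (e k - V (h + 1)) +
              (1 - phat k) * (V (h + 1) - Vhat (h + 1))|
            ≤ |p k - phat k| * |e k - V (h + 1)| +
              (1 - phat k) * |V (h + 1) - Vhat (h + 1)| := by
              refine (abs_add_le _ _).trans ?_
              rw [abs_mul, abs_mul, abs_of_nonneg h1p]
          _ ≤ δ * emax + (1 - σ) * (emax * δ / σ) := by
              have : (1 - phat k) * |V (h + 1) - Vhat (h + 1)| ≤
                  (1 - σ) * (emax * δ / σ) := by
                have : (1 - phat k) * |V (h + 1) - Vhat (h + 1)| ≤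
                    (1 - phat k) * (emax * δ / σ) :=
                  mul_le_mul_of_nonneg_left ivd h1p
                refine this.trans (mul_le_mul_of_nonneg_right (by linarith [hσk k]) ?_)
                positivity
              have h2 : |p k - phat k| * |e k - V (h + 1)| ≤ δ * emax :=
                mul_le_mul (hδk k) hev (abs_nonneg _) hδ0
              linarith
          _ = emax * δ / σ := by field_simp; ring
      refine ⟨hVb0, hVbe, hVhb0, hVhbe, ?_⟩
      rw [hV h h1 hhH, hVhat h h1 hhH, abs_sub_le_iff]
      constructor
      · rw [sub_le_iff_le_add]
        refine ciSup_le fun k => ?_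
        have := (abs_sub_le_iff.mp (hQd k)).1
        have h2 : Qhat h k ≤ ⨆ j, Qhat h j := le_ciSup (hbdd _) k
        linarith
      · rw [sub_le_iff_le_add]
        refine ciSup_le fun k => ?_
        have := (abs_sub_le_iff.mp (hQd k)).2
        have h2 : Q h k ≤ ⨆ j, Q h j := le_ciSup (hbdd _) k
        linarith
  intro h h1 hhH k
  obtain ⟨iv0, ive, ivh0, ivhe, ivd⟩ := key (H - h) (h + 1) (by omega) (by omega)
  rw [hQ h h1 hhH k, hQhat h h1 hhH k]
  have heq : p k * e k + (1 - p k) * V (h + 1) -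
      (phat k * e k + (1 - phat k) * Vhat (h + 1)) =
      (p k - phat k) * (e k - V (h + 1)) +
      (1 - phat k) * (V (h + 1) - Vhat (h + 1)) := by ring
  rw [heq]
  have h1p : 0 ≤ 1 - phat k := le_of_lt (by linarith [(hphat k).2])
  have hev : |e k - V (h + 1)| ≤ emax := by
    rw [abs_sub_le_iff]
    obtain ⟨he0, he1⟩ := he k
    constructor <;> linarith
  have step : |(p k - phat k) * (e k - V (h + 1)) +
      (1 - phat k) * (V (h + 1) - Vhat (h + 1))| ≤
      δ * emax + (1 - σ) * (emax * δ / σ) := by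
    calc |(p k - phat k) * (e k - V (h + 1)) +
          (1 - phat k) * (V (h + 1) - Vhat (h + 1))|
        ≤ |p k - phat k| * |e k - V (h + 1)| +
          (1 - phat k) * |V (h + 1) - Vhat (h + 1)| := by
          refine (abs_add_le _ _).trans ?_
          rw [abs_mul, abs_mul, abs_of_nonneg h1p]
      _ ≤ δ * emax + (1 - σ) * (emax * δ / σ) := by
          have ha : (1 - phat k) * |V (h + 1) - Vhat (h + 1)| ≤
              (1 - σ) * (emax * δ / σ) := by
            have hb : (1 - phat k) * |V (h + 1) - Vhat (h + 1)| ≤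
                (1 - phat k) * (emax * δ / σ) :=
              mul_le_mul_of_nonneg_left ivd h1p
            refine hb.trans (mul_le_mul_of_nonneg_right (by linarith [hσk k]) ?_)
            positivity
          have h2 : |p k - phat k| * |e k - V (h + 1)| ≤ δ * emax :=
            mul_le_mul (hδk k) hev (abs_nonneg _) hδ0
          linarith
  refine step.trans ?_
  have heq2 : δ * emax + (1 - σ) * (emax * δ / σ) = emax * δ / σ := by
    field_simp; ring
  rw [heq2, div_mul_eq_mul_div, div_le_div_iff₀ hσ hσ]
  nlinarith [mul_nonneg hemax hδ0, hσ]
end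

section
/- (Single-crossing of Q-values across arms, key step in the proof of Proposition 2). Suppose the arms are indexed so that p 1 ≥ p 2 ≥ … ≥ p K and e 1 ≤ e 2 ≤ … ≤ e K. Then for any two arms i < j and any step h with 1 ≤ h ≤ H − 1, Q h i − Q h j ≤ Q (h+1) i − Q (h+1) j; that is, the advantage of the lower-index (high-probability, low-reward) arm over the higher-index arm is non-decreasing in the step index h. -/
/-- **Single-crossing of Q-values across arms** (key step in Proposition 2).
If the arms are indexed so that `p` is non-increasing and `e` is non-decreasing,
then for any two arms `i < j` and any step `1 ≤ h ≤ H − 1`,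
`Q h i − Q h j ≤ Q (h+1) i − Q (h+1) j`. -/
theorem single_crossing_of_Q_values
    (K H : ℕ) (hK : 1 ≤ K) (hH : 1 ≤ H)
    (p e : Fin K → ℝ) (emax : ℝ)
    (hp : ∀ k, 0 < p k ∧ p k < 1)
    (he : ∀ k, 0 ≤ e k ∧ e k ≤ emax)
    (hpmono : Antitone p) (hemono : Monotone e)
    (Q : ℕ → Fin K → ℝ) (V : ℕ → ℝ)
    (hVH : V (H + 1) = 0)
    (hQ : ∀ h, 1 ≤ h → h ≤ H → ∀ k, Q h k = p k * e k + (1 - p k) * V (h + 1))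
    (hV : ∀ h, 1 ≤ h → h ≤ H → V h = ⨆ k, Q h k) :
    ∀ (i j : Fin K), i < j → ∀ h, 1 ≤ h → h ≤ H - 1 →
      Q h i - Q h j ≤ Q (h + 1) i - Q (h + 1) j := by
  haveI : Nonempty (Fin K) := ⟨⟨0, hK⟩⟩
  have key : ∀ n, ∀ h, 1 ≤ h → h + n = H → V (h + 1) ≤ V h := by
    intro n
    induction n with
    | zero =>
      intro h h1 hh
      simp only [Nat.add_zero] at hh
      subst hh
      rw [hVH, hV h h1 le_rfl]
      refine le_trans ?_ (le_ciSup (Set.Finite.bddAbove (Set.finite_range _)) (Classical.arbitrary (Fin K)))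
      rw [hQ h h1 le_rfl, hVH]
      have := hp (Classical.arbitrary (Fin K))
      have := he (Classical.arbitrary (Fin K))
      nlinarith [this.1]
    | succ n IH =>
      intro h h1 hh
      have hhH : h + 1 ≤ H := by omega
      have hH2 : h ≤ H := by omega
      have hIH : V (h + 2) ≤ V (h + 1) := IH (h + 1) (by omega) (by omega)
      rw [hV h h1 hH2, hV (h + 1) (by omega) hhH]
      refine ciSup_mono (Set.Finite.bddAbove (Set.finite_range _)) ?_
      intro k
      rw [hQ h h1 hH2 k, hQ (h + 1) (by omega) hhH k]
      have hpk := hp k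
      nlinarith [hpk.1, hpk.2]
  intro i j hij h h1 hh
  have hhH : h + 1 ≤ H := by omega
  have hVm : V (h + 2) ≤ V (h + 1) := by
    obtain ⟨n, hn⟩ : ∃ n, (h + 1) + n = H := ⟨H - (h + 1), by omega⟩
    exact key n (h + 1) (by omega) hn
  have hpij : p j ≤ p i := hpmono hij.le
  rw [hQ h h1 (by omega) i, hQ h h1 (by omega) j,
      hQ (h + 1) (by omega) hhH i, hQ (h + 1) (by omega) hhH j]
  nlinarith [hpij, hVm]
end

section
/- (Monotonicity of the optimal arm index in the horizon, Proposition 2). Suppose the arms are indexed so that p 1 ≥ p 2 ≥ … ≥ p K and e 1 ≤ e 2 ≤ … ≤ e K. For each step h with 1 ≤ h ≤ H, let k⋆ h denote the largest arm index attaining the maximum of k ↦ Q h k. Then k⋆ 1 ≥ k⋆ 2 ≥ … ≥ k⋆ H; that is, the optimal arm index is non-increasing as the remaining horizon shortens, so high-reward/low-probability arms are chosen at earlier positions and high-probability/low-reward arms at later positions. -/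
/-- **Monotonicity of the optimal arm index in the horizon (Proposition 2).**
If the arms are indexed so that `p` is non-increasing and `e` is non-decreasing,
and for each step `1 ≤ h ≤ H` the arm `kstar h` is the largest arm index attaining
the maximum of `k ↦ Q h k`, then the optimal arm index is non-increasing as the
remaining horizon shortens: `kstar (h+1) ≤ kstar h` for `1 ≤ h`, `h + 1 ≤ H`. -/
theorem optimal_arm_index_monotone_in_horizon
    (K H : ℕ) (hK : 1 ≤ K) (hH : 1 ≤ H)
    (p e : Fin K → ℝ) (emax : ℝ)
    (hp : ∀ k, 0 < p k ∧ p k < 1)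
    (he : ∀ k, 0 ≤ e k ∧ e k ≤ emax)
    (hpmono : Antitone p) (hemono : Monotone e)
    (Q : ℕ → Fin K → ℝ) (V : ℕ → ℝ)
    (hVH : V (H + 1) = 0)
    (hQ : ∀ h, 1 ≤ h → h ≤ H → ∀ k, Q h k = p k * e k + (1 - p k) * V (h + 1))
    (hV : ∀ h, 1 ≤ h → h ≤ H → V h = ⨆ k, Q h k)
    (kstar : ℕ → Fin K)
    (hkmax : ∀ h, 1 ≤ h → h ≤ H → ∀ k, Q h k ≤ Q h (kstar h))
    (hklargest : ∀ h, 1 ≤ h → h ≤ H → ∀ k, Q h k = Q h (kstar h) → k ≤ kstar h) :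
    ∀ h, 1 ≤ h → h + 1 ≤ H → kstar (h + 1) ≤ kstar h := by
  have hne : Nonempty (Fin K) := ⟨⟨0, hK⟩⟩
  -- V h is attained at kstar h
  have hVeq : ∀ h, 1 ≤ h → h ≤ H → V h = Q h (kstar h) := by
    intro h h1 h2
    rw [hV h h1 h2]
    refine le_antisymm (ciSup_le (hkmax h h1 h2)) ?_
    exact le_ciSup (Set.Finite.bddAbove (Set.finite_range _)) (kstar h)
  -- V is non-increasing in h
  have hmono : ∀ m h, 1 ≤ h → h + m = H → V (h + 1) ≤ V h := by
    intro m
    induction m with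
    | zero =>
      intro h h1 hm
      have hh : h = H := by omega
      subst hh
      rw [hVH, hVeq h (by omega) le_rfl, hQ h (by omega) le_rfl, hVH]
      have hp' := hp (kstar h); have he' := he (kstar h)
      nlinarith [hp'.1, he'.1]
    | succ m ih =>
      intro h h1 hm
      have hhle : h ≤ H := by omega
      have hih := ih (h + 1) (by omega) (by omega)
      have e1 : V (h + 1) = Q (h + 1) (kstar (h + 1)) :=
        hVeq (h + 1) (by omega) (by omega)
      have e2 : Q (h + 1) (kstar (h + 1)) ≤ Q h (kstar (h + 1)) := by
        rw [hQ (h + 1) (by omega) (by omega), hQ h h1 hhle]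
        have hp' := hp (kstar (h + 1))
        nlinarith [hp'.1, hp'.2]
      have e3 : Q h (kstar (h + 1)) ≤ V h := by
        rw [hV h h1 hhle]
        exact le_ciSup (Set.Finite.bddAbove (Set.finite_range _)) _
      linarith
  intro h h1 hh1
  by_contra hcon
  push_neg at hcon
  set a := kstar (h + 1) with ha
  set b := kstar h with hb
  have hab : b < a := hcon
  have hpab : p a ≤ p b := hpmono hab.le
  have hc : V (h + 2) ≤ V (h + 1) := by
    have := hmono (H - (h + 1)) (h + 1) (by omega) (by omega)
    simpa using this
  -- Q (h+1) b ≤ Q (h+1) a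
  have A1 : p b * e b + (1 - p b) * V (h + 2) ≤ p a * e a + (1 - p a) * V (h + 2) := by
    have := hkmax (h + 1) (by omega) (by omega) b
    rw [hQ (h + 1) (by omega) (by omega) b, hQ (h + 1) (by omega) (by omega) a] at this
    linarith
  -- then Q h b ≤ Q h a
  have A3 : Q h b ≤ Q h a := by
    rw [hQ h h1 (by omega) a, hQ h h1 (by omega) b]
    nlinarith [mul_nonneg (sub_nonneg.2 hpab) (sub_nonneg.2 hc)]
  have A2 : Q h a ≤ Q h b := hkmax h h1 (by omega) a
  have : a ≤ b := hklargest h h1 (by omega) a (le_antisymm A2 A3)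
  omega
end

section
/- (Greedy regret bound via estimation error, Lemma 3). Let σ_min := min over k of p k and σ̂_min := min over k of p̂ k, and assume σ_min > 0 and σ̂_min > 0. Let the greedy policy choose at each step h an arm g h maximizing k ↦ Q̂ h k, and define its true value by W (H+1) = 0 and W h = p (g h) * e (g h) + (1 − p (g h)) * W (h+1) for h = H down to 1. Then V 1 − W 1 ≤ (4 · e_max / (σ_min · σ̂_min)) · (max over j ∈ Fin K of |p j − p̂ j|). -/
set_option maxHeartbeats 1600000 in
/-- **Greedy regret bound via estimation error (Lemma 3).**
Let `σ_min := ⨅ k, p k > 0` and `σ̂_min := ⨅ k, p̂ k > 0`. Let the greedy policy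
choose at each step `h` an arm `g h` maximizing `k ↦ Q̂ h k`, with true value
`W (H+1) = 0`, `W h = p (g h) * e (g h) + (1 − p (g h)) * W (h+1)`. Then
`V 1 − W 1 ≤ (4 e_max / (σ_min σ̂_min)) · max_j |p j − p̂ j|`. -/
theorem greedy_regret_bound
    (K H : ℕ) (hK : 1 ≤ K) (hH : 1 ≤ H)
    (p phat e : Fin K → ℝ) (emax : ℝ)
    (hp : ∀ k, 0 < p k ∧ p k < 1)
    (hphat : ∀ k, 0 < phat k ∧ phat k < 1)
    (he : ∀ k, 0 ≤ e k ∧ e k ≤ emax)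
    (Q Qhat : ℕ → Fin K → ℝ) (V Vhat : ℕ → ℝ)
    (hVH : V (H + 1) = 0) (hVhatH : Vhat (H + 1) = 0)
    (hQ : ∀ h, 1 ≤ h → h ≤ H → ∀ k, Q h k = p k * e k + (1 - p k) * V (h + 1))
    (hQhat : ∀ h, 1 ≤ h → h ≤ H → ∀ k,
      Qhat h k = phat k * e k + (1 - phat k) * Vhat (h + 1))
    (hV : ∀ h, 1 ≤ h → h ≤ H → V h = ⨆ k, Q h k)
    (hVhat : ∀ h, 1 ≤ h → h ≤ H → Vhat h = ⨆ k, Qhat h k)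
    (hσ : 0 < ⨅ k, p k) (hσhat : 0 < ⨅ k, phat k)
    (g : ℕ → Fin K)
    (hg : ∀ h, 1 ≤ h → h ≤ H → ∀ k, Qhat h k ≤ Qhat h (g h))
    (W : ℕ → ℝ)
    (hWH : W (H + 1) = 0)
    (hW : ∀ h, 1 ≤ h → h ≤ H →
      W h = p (g h) * e (g h) + (1 - p (g h)) * W (h + 1)) :
    V 1 - W 1 ≤
      (4 * emax / ((⨅ k, p k) * ⨅ k, phat k)) * ⨆ j, |p j - phat j| := by
  haveI : Nonempty (Fin K) := ⟨⟨0, hK⟩⟩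
  have k0 : Fin K := ⟨0, hK⟩
  set σ := ⨅ k, p k with hσdef
  set σh := ⨅ k, phat k with hσhdef
  set Δ := ⨆ j, |p j - phat j| with hΔdef
  have hσle : ∀ k, σ ≤ p k := fun k => ciInf_le (Finite.bddBelow_range _) k
  have hσhle : ∀ k, σh ≤ phat k := fun k => ciInf_le (Finite.bddBelow_range _) k
  have hΔge : ∀ k, |p k - phat k| ≤ Δ := fun k => hΔdef ▸ le_ciSup (Finite.bddAbove_range fun j => |p j - phat j|) k
  have hΔ0 : 0 ≤ Δ := le_trans (abs_nonneg _) (hΔge k0)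
  have hσ1 : σ < 1 := lt_of_le_of_lt (hσle k0) (hp k0).2
  have hσh1 : σh < 1 := lt_of_le_of_lt (hσhle k0) (hphat k0).2
  have hemax : 0 ≤ emax := le_trans (he k0).1 (he k0).2
  set DA := Δ * emax / σ with hDAdef
  set DB := Δ * emax / σh with hDBdef
  have hDA0 : 0 ≤ DA := div_nonneg (mul_nonneg hΔ0 hemax) hσ.le
  have hDB0 : 0 ≤ DB := div_nonneg (mul_nonneg hΔ0 hemax) hσhat.le
  have hDAeq : Δ * emax + (1 - σ) * DA = DA := by
    rw [hDAdef]; field_simp; ring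
  have hDBeq : Δ * emax + (1 - σh) * DB = DB := by
    rw [hDBdef]; field_simp; ring
  have key : ∀ n h, 1 ≤ h → h + n = H + 1 →
      (0 ≤ Vhat h ∧ Vhat h ≤ emax) ∧ (0 ≤ W h ∧ W h ≤ emax) ∧
      V h - Vhat h ≤ DA ∧ Vhat h - W h ≤ DB := by
    intro n
    induction n with
    | zero =>
      intro h h1 heq
      have hh : h = H + 1 := by omega
      subst hh
      simp only [hVhatH, hWH, hVH]
      refine ⟨⟨le_refl _, hemax⟩, ⟨le_refl _, hemax⟩, by simpa using hDA0, by simpa using hDB0⟩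
    | succ n ih =>
      intro h h1 heq
      have hhH : h ≤ H := by omega
      obtain ⟨⟨hv0, hv1⟩, ⟨hw0, hw1⟩, hA, hB⟩ := ih (h + 1) (by omega) (by omega)
      -- Vhat bounds
      have hQb : ∀ k, 0 ≤ Qhat h k ∧ Qhat h k ≤ emax := by
        intro k
        rw [hQhat h h1 hhH k]
        obtain ⟨hpk0, hpk1⟩ := hphat k
        obtain ⟨hek0, hek1⟩ := he k
        constructor <;> nlinarith
      have hVhat0 : 0 ≤ Vhat h := by
        rw [hVhat h h1 hhH]
        exact le_trans (hQb k0).1 (le_ciSup (Finite.bddAbove_range _) k0)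
      have hVhat1 : Vhat h ≤ emax := by
        rw [hVhat h h1 hhH]
        exact ciSup_le fun k => (hQb k).2
      -- W bounds
      have hWb0 : 0 ≤ W h := by
        rw [hW h h1 hhH]
        obtain ⟨hpk0, hpk1⟩ := hp (g h)
        obtain ⟨hek0, hek1⟩ := he (g h)
        nlinarith
      have hWb1 : W h ≤ emax := by
        rw [hW h h1 hhH]
        obtain ⟨hpk0, hpk1⟩ := hp (g h)
        obtain ⟨hek0, hek1⟩ := he (g h)
        nlinarith
      refine ⟨⟨hVhat0, hVhat1⟩, ⟨hWb0, hWb1⟩, ?_, ?_⟩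
      · -- V h - Vhat h ≤ DA
        rw [hV h h1 hhH, sub_le_iff_le_add]
        refine ciSup_le fun k => ?_
        have hQhatle : Qhat h k ≤ Vhat h := by
          rw [hVhat h h1 hhH]; exact le_ciSup (Finite.bddAbove_range _) k
        have hdiff : Q h k - Qhat h k ≤ Δ * emax + (1 - σ) * DA := by
          rw [hQ h h1 hhH k, hQhat h h1 hhH k]
          have hid : p k * e k + (1 - p k) * V (h + 1) -
              (phat k * e k + (1 - phat k) * Vhat (h + 1)) =
              (p k - phat k) * (e k - Vhat (h + 1)) +
              (1 - p k) * (V (h + 1) - Vhat (h + 1)) := by ring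
          rw [hid]
          have habs : |e k - Vhat (h + 1)| ≤ emax := by
            obtain ⟨hek0, hek1⟩ := he k
            rw [abs_le]; constructor <;> linarith
          have e1 : (p k - phat k) * (e k - Vhat (h + 1)) ≤ Δ * emax :=
            calc (p k - phat k) * (e k - Vhat (h + 1))
                ≤ |(p k - phat k) * (e k - Vhat (h + 1))| := le_abs_self _
              _ = |p k - phat k| * |e k - Vhat (h + 1)| := abs_mul _ _
              _ ≤ Δ * emax := mul_le_mul (hΔge k) habs (abs_nonneg _) hΔ0
          have h1p : 0 ≤ 1 - p k := by linarith [(hp k).2]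
          have e2 : (1 - p k) * (V (h + 1) - Vhat (h + 1)) ≤ (1 - σ) * DA := by
            have step1 : (1 - p k) * (V (h + 1) - Vhat (h + 1)) ≤ (1 - p k) * DA :=
              mul_le_mul_of_nonneg_left hA h1p
            have step2 : (1 - p k) * DA ≤ (1 - σ) * DA :=
              mul_le_mul_of_nonneg_right (by linarith [hσle k]) hDA0
            linarith
          linarith
        calc Q h k ≤ Qhat h k + (Δ * emax + (1 - σ) * DA) := by linarith
          _ ≤ Vhat h + DA := by rw [hDAeq]; linarith
          _ = DA + Vhat h := by ring
      · -- Vhat h - W h ≤ DB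
        have hVg : Vhat h = Qhat h (g h) := by
          rw [hVhat h h1 hhH]
          exact le_antisymm (ciSup_le (hg h h1 hhH)) (le_ciSup (Finite.bddAbove_range _) (g h))
        rw [hVg, hQhat h h1 hhH (g h), hW h h1 hhH]
        have hid : phat (g h) * e (g h) + (1 - phat (g h)) * Vhat (h + 1) -
            (p (g h) * e (g h) + (1 - p (g h)) * W (h + 1)) =
            (phat (g h) - p (g h)) * (e (g h) - W (h + 1)) +
            (1 - phat (g h)) * (Vhat (h + 1) - W (h + 1)) := by ring
        rw [hid]
        have habs : |e (g h) - W (h + 1)| ≤ emax := by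
          obtain ⟨hek0, hek1⟩ := he (g h)
          rw [abs_le]; constructor <;> linarith
        have e1 : (phat (g h) - p (g h)) * (e (g h) - W (h + 1)) ≤ Δ * emax :=
          calc (phat (g h) - p (g h)) * (e (g h) - W (h + 1))
              ≤ |(phat (g h) - p (g h)) * (e (g h) - W (h + 1))| := le_abs_self _
            _ = |phat (g h) - p (g h)| * |e (g h) - W (h + 1)| := abs_mul _ _
            _ ≤ Δ * emax := by
                rw [abs_sub_comm]
                exact mul_le_mul (hΔge (g h)) habs (abs_nonneg _) hΔ0
        have h1p : 0 ≤ 1 - phat (g h) := by linarith [(hphat (g h)).2]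
        have e2 : (1 - phat (g h)) * (Vhat (h + 1) - W (h + 1)) ≤ (1 - σh) * DB := by
          have step1 : (1 - phat (g h)) * (Vhat (h + 1) - W (h + 1)) ≤ (1 - phat (g h)) * DB :=
            mul_le_mul_of_nonneg_left hB h1p
          have step2 : (1 - phat (g h)) * DB ≤ (1 - σh) * DB :=
            mul_le_mul_of_nonneg_right (by linarith [hσhle (g h)]) hDB0
          linarith
        linarith [hDBeq]
      -- end
  obtain ⟨_, _, hA1, hB1⟩ := key H 1 le_rfl (by omega)
  have hfin : DA + DB ≤ 4 * emax / (σ * σh) * Δ := by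
    rw [div_mul_eq_mul_div, le_div_iff₀ (mul_pos hσ hσhat)]
    have h1 : DA * (σ * σh) = Δ * emax * σh := by rw [hDAdef]; field_simp
    have h2 : DB * (σ * σh) = Δ * emax * σ := by rw [hDBdef]; field_simp
    have h3 : Δ * emax * σh ≤ Δ * emax := by nlinarith [mul_nonneg hΔ0 hemax]
    have h4 : Δ * emax * σ ≤ Δ * emax := by nlinarith [mul_nonneg hΔ0 hemax]
    nlinarith
  linarith
end

section
/- (Uniform-coverage bound for the maximum arm radius, Lemma 15). Let m, K ≥ 1 and let c_z > 0, λ > 0, w_min > 0, p_min > 0 with λ ≥ c_z² and w_min·p_min/2 ≤ λ. For each episode t ∈ {1, …, T} let A_{t−1} be a real symmetric positive definite m × m matrix satisfying the coverage condition zᵀ A_{t−1} z ≥ (λ + (w_min·p_min/2)·(t − 1)) · ‖z‖² for all z ∈ ℝ^m, and let z_{t,1}, …, z_{t,K} ∈ ℝ^m be feature vectors with ‖z_{t,k}‖ ≤ c_z for all k. Then ∑_{t=1}^{T} min{ max_{k ∈ [K]} z_{t,k}ᵀ A_{t−1}^{-1} z_{t,k}, 1 } ≤ (4·c_z² / (w_min·p_min))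 · log(1 + (w_min·p_min / (2λ)) · T), where log denotes the natural logarithm. -/
/-!
With `s = w_min p_min / 2` and `c_t = λ + s (t - 1)`, the coverage condition says `A_{t-1} ⪰ c_t I`,
so every squared radius at episode `t` is at most `c_z² / c_t`. Since `s ≤ λ` we have
`c_t + s ≤ 2 c_t`, and `x / (1 + x) ≤ log (1 + x)` turns `c_z² / c_t` into
`(2 c_z² / s) (log (c_t + s) - log c_t)`. These increments of `x ↦ log (λ + s x)` telescope to
`(2 c_z² / s) log (1 + s T / λ)`.
-/

open Matrix Finset

section Coercive

variable {n : Type*} [Fintype n] [DecidableEq n]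

theorem dotProduct_inv_mulVec_le_of_coercive {A : Matrix n n ℝ} {c : ℝ} (hc : 0 < c)
    (hA : ∀ w : n → ℝ, c * (w ⬝ᵥ w) ≤ w ⬝ᵥ A *ᵥ w) (v : n → ℝ) :
    v ⬝ᵥ A⁻¹ *ᵥ v ≤ (v ⬝ᵥ v) / c := by
  by_cases hdet : IsUnit A.det
  · set w := A⁻¹ *ᵥ v
    have hAw : A *ᵥ w = v := by rw [mulVec_mulVec, mul_nonsing_inv A hdet, one_mulVec]
    have hcw : c * (w ⬝ᵥ w) ≤ v ⬝ᵥ w := by simpa [hAw, dotProduct_comm] using hA w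
    -- expand `0 ≤ ‖c w - v‖²` and use `c ‖w‖² ≤ ⟪v, w⟫`
    have hsq : 0 ≤ (c • w - v) ⬝ᵥ (c • w - v) := by
      simpa using dotProduct_self_star_nonneg (c • w - v)
    simp only [sub_dotProduct, dotProduct_sub, smul_dotProduct, dotProduct_smul, smul_eq_mul,
      dotProduct_comm w v] at hsq
    rw [le_div_iff₀ hc]
    nlinarith
  -- coercivity makes `A` invertible; this branch only meets Mathlib's junk value `A⁻¹ = 0`
  · rw [nonsing_inv_apply_not_isUnit A hdet, zero_mulVec, dotProduct_zero]
    exact div_nonneg (by simpa using dotProduct_self_star_nonneg v) hc.le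

theorem iSup_dotProduct_inv_mulVec_le_of_coercive {ι : Type*} {A : Matrix n n ℝ} {c r : ℝ}
    (hc : 0 < c) (hA : ∀ w : n → ℝ, c * (w ⬝ᵥ w) ≤ w ⬝ᵥ A *ᵥ w) (z : ι → n → ℝ)
    (hz : ∀ k, z k ⬝ᵥ z k ≤ r) (hr : 0 ≤ r) :
    ⨆ k, z k ⬝ᵥ A⁻¹ *ᵥ z k ≤ r / c :=
  Real.iSup_le (fun k => (dotProduct_inv_mulVec_le_of_coercive hc hA (z k)).trans
    (div_le_div_of_nonneg_right (hz k) hc.le)) (div_nonneg hr hc.le)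

end Coercive

theorem div_add_le_log_add_sub_log {a s : ℝ} (ha : 0 < a) (hs : 0 ≤ s) :
    s / (a + s) ≤ Real.log (a + s) - Real.log a := by
  have has : 0 < a + s := by linarith
  rw [← Real.log_div has.ne' ha.ne']
  convert Real.one_sub_inv_le_log_of_pos (div_pos has ha) using 1
  field_simp
  ring

theorem div_le_two_mul_div_mul_log_add_sub_log {a b s : ℝ} (hs : 0 < s) (hsa : s ≤ a)
    (hb : 0 ≤ b) : b / a ≤ 2 * b / s * (Real.log (a + s) - Real.log a) := by
  have ha : 0 < a := hs.trans_le hsa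
  calc b / a ≤ 2 * b / (a + s) := by
        rw [div_le_div_iff₀ ha (by linarith)]
        nlinarith
    _ = 2 * b / s * (s / (a + s)) := by field_simp
    _ ≤ 2 * b / s * (Real.log (a + s) - Real.log a) :=
        mul_le_mul_of_nonneg_left (div_add_le_log_add_sub_log ha hs.le) (by positivity)

theorem sum_Icc_sub_cast_sub_one (f : ℝ → ℝ) (T : ℕ) :
    ∑ t ∈ Icc 1 T, (f t - f ((t : ℝ) - 1)) = f T - f 0 := by
  induction T with
  | zero => simp
  | succ T ih =>
    rw [sum_Icc_succ_top (by omega), ih]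
    push_cast
    ring_nf

theorem uniform_coverage_max_arm_radius_general
    (m K T : ℕ)
    (cz lam wmin pmin : ℝ)
    (hwmin : 0 < wmin) (hpmin : 0 < pmin)
    (hwp : wmin * pmin / 2 ≤ lam)
    (A : ℕ → Matrix (Fin m) (Fin m) ℝ)
    (hcover : ∀ t ∈ Finset.Icc 1 T, ∀ zv : Fin m → ℝ,
      (lam + wmin * pmin / 2 * ((t : ℝ) - 1)) * (zv ⬝ᵥ zv) ≤
        zv ⬝ᵥ (A (t - 1)).mulVec zv)
    (z : ℕ → Fin K → Fin m → ℝ)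
    (hz : ∀ t ∈ Finset.Icc 1 T, ∀ k : Fin K, (z t k) ⬝ᵥ (z t k) ≤ cz ^ 2) :
    ∑ t ∈ Finset.Icc 1 T,
        min (⨆ k : Fin K, (z t k) ⬝ᵥ ((A (t - 1))⁻¹.mulVec (z t k))) 1 ≤
      (4 * cz ^ 2 / (wmin * pmin)) *
        Real.log (1 + wmin * pmin / (2 * lam) * (T : ℝ)) := by
  set s := wmin * pmin / 2 with hs
  have hs0 : 0 < s := by positivity
  have hlam : 0 < lam := hs0.trans_le hwp
  have hstep : ∀ t ∈ Icc 1 T,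
      min (⨆ k : Fin K, (z t k) ⬝ᵥ ((A (t - 1))⁻¹.mulVec (z t k))) 1 ≤
        2 * cz ^ 2 / s * (Real.log (lam + s * t) - Real.log (lam + s * ((t : ℝ) - 1))) := by
    intro t ht
    have ht1 : (1 : ℝ) ≤ t := by exact_mod_cast (mem_Icc.1 ht).1
    have hsc : s ≤ lam + s * ((t : ℝ) - 1) := by nlinarith
    calc _ ≤ ⨆ k : Fin K, (z t k) ⬝ᵥ ((A (t - 1))⁻¹.mulVec (z t k)) := min_le_left _ _
      _ ≤ cz ^ 2 / (lam + s * ((t : ℝ) - 1)) :=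
        iSup_dotProduct_inv_mulVec_le_of_coercive (hs0.trans_le hsc) (hcover t ht) (z t)
          (hz t ht) (sq_nonneg cz)
      _ ≤ _ := by
        convert div_le_two_mul_div_mul_log_add_sub_log hs0 hsc (sq_nonneg cz) using 4
        ring
  calc _ ≤ ∑ t ∈ Icc 1 T,
        2 * cz ^ 2 / s * (Real.log (lam + s * t) - Real.log (lam + s * ((t : ℝ) - 1))) :=
        sum_le_sum hstep
    _ = 2 * cz ^ 2 / s * (Real.log (lam + s * T) - Real.log lam) := by
        rw [← mul_sum, sum_Icc_sub_cast_sub_one (fun x => Real.log (lam + s * x)), mul_zero,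
          add_zero]
    _ = _ := by
        rw [← Real.log_div (by positivity) hlam.ne']
        congr 1
        · rw [hs]; field_simp; ring
        · rw [hs]; field_simp

/-- **Uniform-coverage bound for the maximum arm radius (Lemma 15).**
Let `λ ≥ c_z² > 0`, `w_min, p_min > 0` with `w_min p_min / 2 ≤ λ`. Suppose for each
episode `t ∈ {1, …, T}` the symmetric positive definite design matrix `A (t−1)`
satisfies the coverage condition
`zᵀ A_{t−1} z ≥ (λ + (w_min p_min / 2)(t − 1)) ‖z‖²` for all `z`, and the feature
vectors satisfy `‖z_{t,k}‖ ≤ c_z`. Then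
`∑_{t=1}^{T} min{max_k z_{t,k}ᵀ A_{t−1}⁻¹ z_{t,k}, 1}
  ≤ (4 c_z² / (w_min p_min)) log(1 + (w_min p_min / (2 λ)) T)`. -/
theorem uniform_coverage_max_arm_radius
    (m K T : ℕ) (hm : 1 ≤ m) (hK : 1 ≤ K)
    (cz lam wmin pmin : ℝ)
    (hcz : 0 < cz) (hlam : cz ^ 2 ≤ lam)
    (hwmin : 0 < wmin) (hpmin : 0 < pmin)
    (hwp : wmin * pmin / 2 ≤ lam)
    (A : ℕ → Matrix (Fin m) (Fin m) ℝ)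
    (hAsymm : ∀ t ∈ Finset.Icc 1 T, (A (t - 1)).IsSymm)
    (hApos : ∀ t ∈ Finset.Icc 1 T, (A (t - 1)).PosDef)
    (hcover : ∀ t ∈ Finset.Icc 1 T, ∀ zv : Fin m → ℝ,
      (lam + wmin * pmin / 2 * ((t : ℝ) - 1)) * (zv ⬝ᵥ zv) ≤
        zv ⬝ᵥ (A (t - 1)).mulVec zv)
    (z : ℕ → Fin K → Fin m → ℝ)
    (hz : ∀ t ∈ Finset.Icc 1 T, ∀ k : Fin K, (z t k) ⬝ᵥ (z t k) ≤ cz ^ 2) :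
    ∑ t ∈ Finset.Icc 1 T,
        min (⨆ k : Fin K, (z t k) ⬝ᵥ ((A (t - 1))⁻¹.mulVec (z t k))) 1 ≤
      (4 * cz ^ 2 / (wmin * pmin)) *
        Real.log (1 + wmin * pmin / (2 * lam) * (T : ℝ)) :=
  uniform_coverage_max_arm_radius_general m K T cz lam wmin pmin hwmin hpmin hwp A hcover z hz
end
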